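/- The domination cover pebbling number of the star graph K_{1,n−1} on n ≥ 3 vertices equals n − 1. -/

import Mathlib

open Finset

/-- A single pebbling move: remove two pebbles from `u`, add one to a neighbor `v`. -/
def PebblingMove {V : Type*} [DecidableEq V] (G : SimpleGraph V) (c c' : V → ℕ) : Prop :=
  ∃ u v, G.Adj u v ∧ 2 ≤ c u ∧
    c' = fun w => if w = u then c u - 2 else if w = v then c w + 1 else c w

/-- `c'` is reachable from `c` by a sequence of pebbling moves. -/
def PebblingReach {V : Type*} [DecidableEq V] (G : SimpleGraph V) : (V → ℕ) → (V → ℕ) → Prop :=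
  Relation.ReflTransGen (PebblingMove G)

/-- The occupied vertices of `c` form a dominating set of `G`. -/
def OccupiedDominates {V : Type*} (G : SimpleGraph V) (c : V → ℕ) : Prop :=
  ∀ v, 0 < c v ∨ ∃ u, G.Adj v u ∧ 0 < c u

/-- A configuration is domination-cover-pebbling solvable. -/
def DCPSolvable {V : Type*} [DecidableEq V] (G : SimpleGraph V) (c : V → ℕ) : Prop :=
  ∃ c', PebblingReach G c c' ∧ OccupiedDominates G c'

/-- The domination cover pebbling number. -/
noncomputable def dcpNumber {V : Type*} [Fintype V] [DecidableEq V] (G : SimpleGraph V) : ℕ :=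
  sInf {m | ∀ c : V → ℕ, m ≤ ∑ v, c v → DCPSolvable G c}

/-- The cover pebbling number. -/
noncomputable def coverPebblingNumber {V : Type*} [Fintype V] [DecidableEq V]
    (G : SimpleGraph V) : ℕ :=
  sInf {m | ∀ c : V → ℕ, m ≤ ∑ v, c v →
    ∃ c', PebblingReach G c c' ∧ ∀ v, 0 < c' v}

/-- `v` is undominated by the occupied set of `c`. -/
def Undominated {V : Type*} (G : SimpleGraph V) (c : V → ℕ) (v : V) : Prop :=
  c v = 0 ∧ ∀ u, G.Adj v u → c u = 0

/-- Every connected set of undominated vertices has at most `ω` vertices. -/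
def SubversionSolved {V : Type*} (G : SimpleGraph V) (c : V → ℕ) (ω : ℕ) : Prop :=
  ∀ s : Finset V, (∀ v ∈ s, Undominated G c v) → (G.induce (s : Set V)).Connected →
    s.card ≤ ω

/-- The ω-subversion domination cover pebbling number. -/
noncomputable def subversionNumber {V : Type*} [Fintype V] [DecidableEq V]
    (G : SimpleGraph V) (ω : ℕ) : ℕ :=
  sInf {m | ∀ c : V → ℕ, m ≤ ∑ v, c v →
    ∃ c', PebblingReach G c c' ∧ SubversionSolved G c' ω}


/-- The star graph on `Fin n`, with center `0`. -/
def starGraph (n : ℕ) : SimpleGraph (Fin n) where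
  Adj u v := u ≠ v ∧ (u.val = 0 ∨ v.val = 0)
  symm := by constructor; intro u v ⟨h1, h2⟩; exact ⟨h1.symm, h2.symm⟩
  loopless := by constructor; intro v h; exact h.1 rfl

/-- The domination cover pebbling number of the star `K_{1,n-1}` on `n ≥ 3` vertices is `n - 1`. -/
theorem dcp_star (n : ℕ) (hn : 3 ≤ n) :
    dcpNumber (starGraph n) = n - 1 := by
  have hz : 0 < n := by omega
  set z : Fin n := ⟨0, by omega⟩ with hzdef
  set lst : Fin n := ⟨n - 1, by omega⟩ with hlstdef
  have hzlst : z ≠ lst := by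
    simp only [hzdef, hlstdef, Ne, Fin.ext_iff]
    omega
  -- helper: any config with the center occupied is dominating
  have hdom : ∀ c : Fin n → ℕ, 0 < c z → OccupiedDominates (starGraph n) c := by
    intro c h0 v
    by_cases hv : v = z
    · left; rwa [hv]
    · right; exact ⟨z, ⟨hv, Or.inr rfl⟩, h0⟩
  -- membership of n-1
  have hmem : (n - 1) ∈ {m | ∀ c : Fin n → ℕ, m ≤ ∑ v, c v → DCPSolvable (starGraph n) c} := by
    intro c hc
    by_cases h0 : 0 < c z
    · exact ⟨c, Relation.ReflTransGen.refl, hdom c h0⟩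
    · have hz0 : c z = 0 := by omega
      by_cases hall : ∀ v, v ≠ z → 0 < c v
      · refine ⟨c, Relation.ReflTransGen.refl, fun v => ?_⟩
        by_cases hv : v = z
        · right
          have hone : (⟨1, by omega⟩ : Fin n) ≠ z := by
            simp only [hzdef, Ne, Fin.ext_iff]; omega
          exact ⟨⟨1, by omega⟩, ⟨by rw [hv]; exact hone.symm, Or.inl (by rw [hv])⟩,
            hall _ hone⟩
        · left; exact hall v hv
      · push_neg at hall
        obtain ⟨v0, hv0ne, hv0⟩ := hall
        have hv00 : c v0 = 0 := by omega
        have hu : ∃ u, 2 ≤ c u := by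
          by_contra hno
          push_neg at hno
          have hle : ∀ u, c u ≤ 1 := fun u => by have := hno u; omega
          have hsum : ∑ v, c v = ∑ v ∈ univ \ ({z, v0} : Finset (Fin n)), c v := by
            refine (Finset.sum_subset (Finset.sdiff_subset) ?_).symm
            intro x _ hx
            simp only [Finset.mem_sdiff, Finset.mem_univ, true_and, not_not,
              Finset.mem_insert, Finset.mem_singleton] at hx
            rcases hx with rfl | rfl
            · exact hz0
            · exact hv00
          have hcard : (univ \ ({z, v0} : Finset (Fin n))).card = n - 2 := by
            rw [Finset.card_sdiff_of_subset (by simp)]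
            rw [Finset.card_insert_of_notMem (by simp [Ne, hv0ne.symm]),
              Finset.card_singleton]
            simp
          have hb : ∑ v ∈ univ \ ({z, v0} : Finset (Fin n)), c v ≤ n - 2 := by
            calc ∑ v ∈ univ \ ({z, v0} : Finset (Fin n)), c v
                ≤ ∑ _v ∈ univ \ ({z, v0} : Finset (Fin n)), 1 :=
                  Finset.sum_le_sum (fun x _ => hle x)
              _ = n - 2 := by rw [Finset.sum_const, smul_eq_mul, mul_one, hcard]
          omega
        obtain ⟨u, hu2⟩ := hu
        have hune : u ≠ z := fun h => by rw [h, hz0] at hu2; omega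
        refine ⟨_, Relation.ReflTransGen.single
          ⟨u, z, ⟨hune, Or.inr rfl⟩, hu2, rfl⟩, hdom _ ?_⟩
        have hzu : ¬ (z = u) := Ne.symm hune
        simp [hzu]
  -- the bad configuration of size n - 2
  have hnotmem : ∀ m ∈ {m | ∀ c : Fin n → ℕ, m ≤ ∑ v, c v → DCPSolvable (starGraph n) c},
      n - 1 ≤ m := by
    intro m hm
    by_contra hlt
    push_neg at hlt
    set cbad : Fin n → ℕ := fun v => if v = z ∨ v = lst then 0 else 1 with hcbad
    have hle1 : ∀ u, cbad u ≤ 1 := by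
      intro u; simp only [hcbad]; split <;> omega
    have hsum : ∑ v, cbad v = n - 2 := by
      have h1 : ∑ v, cbad v = ∑ v ∈ univ \ ({z, lst} : Finset (Fin n)), cbad v := by
        refine (Finset.sum_subset (Finset.sdiff_subset) ?_).symm
        intro x _ hx
        simp only [Finset.mem_sdiff, Finset.mem_univ, true_and, not_not,
          Finset.mem_insert, Finset.mem_singleton] at hx
        simp [hcbad, hx]
      have h2 : ∑ v ∈ univ \ ({z, lst} : Finset (Fin n)), cbad v
          = ∑ _v ∈ univ \ ({z, lst} : Finset (Fin n)), 1 := by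
        refine Finset.sum_congr rfl ?_
        intro x hx
        simp only [Finset.mem_sdiff, Finset.mem_univ, true_and,
          Finset.mem_insert, Finset.mem_singleton] at hx
        push_neg at hx
        simp [hcbad, hx.1, hx.2]
      have h3 : (univ \ ({z, lst} : Finset (Fin n))).card = n - 2 := by
        rw [Finset.card_sdiff_of_subset (by simp)]
        rw [Finset.card_insert_of_notMem (by simp [hzlst]), Finset.card_singleton]
        simp
      rw [h1, h2, Finset.sum_const, smul_eq_mul, mul_one, h3]
    have hsolv : DCPSolvable (starGraph n) cbad := hm cbad (by omega)
    obtain ⟨c', hreach, hdom'⟩ := hsolv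
    have hfix : ∀ c'' : Fin n → ℕ, PebblingReach (starGraph n) cbad c'' → c'' = cbad := by
      intro c'' h
      induction h with
      | refl => rfl
      | tail _hab hbc ih =>
        rw [ih] at hbc
        obtain ⟨u, v, _, h2, _⟩ := hbc
        have := hle1 u
        omega
    rw [hfix c' hreach] at hdom'
    rcases hdom' lst with h | ⟨u, ⟨_, hadj⟩, hu⟩
    · simp [hcbad] at h
    · rcases hadj with h' | h'
      · simp only [hlstdef] at h'; omega
      · have : u = z := by simp only [hzdef, Fin.ext_iff]; exact h'
        rw [this] at hu
        simp [hcbad] at hu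
  -- conclude
  unfold dcpNumber
  exact le_antisymm (Nat.sInf_le hmem) (le_csInf ⟨_, hmem⟩ hnotmem)
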